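/- arXiv:1112.0969 — 3 statements merged into one kernel-verified Lean document; each statement's English description precedes it below -/
import Mathlib

section
/- For any w ∈ I_*, the bar operator on M satisfies ‾(a_w) = ε_w · (T_{w⁻¹})⁻¹ · a_{w⁻¹}, where ε_w = (−1)^{l(w)}. -/
/-!
Multiplying by `T_{w⁻¹}`, it suffices to show `T_{w⁻¹} · bar(a_w) = ε_w a_{w⁻¹}`, which goes by
induction on `l(w)`. Let `s` be a left descent of `w ∈ I_*`. If `sw = ws*`, then `a_w` enters
`T_s a_{sw}` with coefficient `u + 1`; barring this relation, multiplying by `T_{w⁻¹}` and using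
the induction hypothesis for `sw` leaves `(u⁻¹ + 1)(T_{w⁻¹} bar(a_w) + ε_{sw} a_{w⁻¹}) = 0`, and
`M` is torsion-free. If `sw ≠ ws*`, then `a_w = T_s a_{sws*}` with `l(sws*) = l(w) - 2`, and the
claim for `sws*` transports directly. The drop by two is forced by the module itself: were
`l(sws*) = l(w)`, `T_s` would act on `a_w, a_{sws*}` by a matrix whose square violates the
quadratic relation (it would give `u⁴ = u²`).
-/

open LaurentPolynomial

/-- The ground ring `A = ℤ[u,u⁻¹]`. -/
noncomputable abbrev HeckeA : Type := LaurentPolynomial ℤ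

/-- The indeterminate `u ∈ ℤ[u,u⁻¹]`. -/
noncomputable def uA : HeckeA := LaurentPolynomial.T 1

lemma T_neg_one_add_one_ne_zero : (T (-1) + 1 : HeckeA) ≠ 0 := by
  intro h
  simpa [← T_zero] using congrArg (·.coeff 0) h

lemma uA_pow_four_ne_uA_pow_two : (uA ^ 4 : HeckeA) ≠ uA ^ 2 := by
  intro h
  simp only [uA, T_pow] at h
  simpa using congrArg (·.coeff 4) h

theorem isUnit_of_add_one_mul_sub_algebraMap_eq_zero {R A : Type*} [CommRing R] [Ring A]
    [Algebra R A] {t : A} {q : R} (hq : IsUnit q) (h : (t + 1) * (t - algebraMap R A q) = 0) :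
    IsUnit t := by
  have hcomm : Commute t (t + 1 - algebraMap R A q) :=
    ((Commute.refl t).add_right (Commute.one_right t)).sub_right
      (Algebra.commute_algebraMap_right q t)
  have hprod : t * (t + 1 - algebraMap R A q) = algebraMap R A q := by
    rw [← sub_eq_zero, ← h]; noncomm_ring
  exact (hcomm.isUnit_mul_iff.mp (by rw [hprod]; exact hq.map _)).1

theorem IsUnit.mul_eq_one_of_mul_eq_one {A : Type*} [Monoid A] {x y : A} (hx : IsUnit x)
    (h : y * x = 1) : x * y = 1 := by
  obtain ⟨u, rfl⟩ := hx
  rw [Units.mul_eq_one_iff_eq_inv.mp h, Units.mul_inv]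

namespace CoxeterSystem

variable {B W : Type*} [Group W] {Mx : CoxeterMatrix B} (cs : CoxeterSystem Mx W)

theorem isUnit_of_isUnit_simple {A : Type*} [Monoid A] {f : W → A} (h1 : f 1 = 1)
    (hmul : ∀ w w', cs.length (w * w') = cs.length w + cs.length w' → f w * f w' = f (w * w'))
    (hs : ∀ i, IsUnit (f (cs.simple i))) (w : W) : IsUnit (f w) := by
  induction w using cs.simple_induction_left with
  | one => simp [h1]
  | mul_simple_left w i ih =>
    rcases cs.length_simple_mul w i with hup | hdown
    · rw [← hmul _ _ (by rw [hup, length_simple, add_comm])]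
      exact (hs i).mul ih
    · obtain ⟨u, hu⟩ := hs i
      have := hmul (cs.simple i) (cs.simple i * w) (by simp; omega)
      rw [simple_mul_simple_cancel_left, ← hu] at this
      exact (Units.isUnit_units_mul u _).mp (this ▸ ih)

theorem length_map_le {F : Type*} [FunLike F W W] [MonoidHomClass F W W] {φ : F}
    (hφ : ∀ i, ∃ j, φ (cs.simple i) = cs.simple j) (w : W) :
    cs.length (φ w) ≤ cs.length w := by
  choose f hf using hφ
  obtain ⟨ω, hω, rfl⟩ := cs.exists_isReduced w
  have : φ (cs.wordProd ω) = cs.wordProd (ω.map f) := by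
    simp only [wordProd, map_list_prod, List.map_map]
    exact congrArg _ (List.map_congr_left fun i _ => hf i)
  rw [this, hω.eq]
  exact (cs.length_wordProd_le _).trans (List.length_map _).le

theorem length_map_of_involutive {F : Type*} [FunLike F W W] [MonoidHomClass F W W] {φ : F}
    (hφ2 : Function.Involutive φ) (hφ : ∀ i, ∃ j, φ (cs.simple i) = cs.simple j) (w : W) :
    cs.length (φ w) = cs.length w :=
  (cs.length_map_le hφ w).antisymm (by simpa [hφ2 w] using cs.length_map_le hφ (φ w))

end CoxeterSystem

def IsTwistedInvolution {W : Type*} [Group W] (σ : W ≃* W) (w : W) : Prop := (σ w)⁻¹ = w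

namespace IsTwistedInvolution

variable {B W : Type*} [Group W] {Mx : CoxeterMatrix B} {cs : CoxeterSystem Mx W} {σ : W ≃* W}
  {w : W}

theorem inv (hw : IsTwistedInvolution σ w) : IsTwistedInvolution σ w⁻¹ := by
  unfold IsTwistedInvolution at *
  rw [map_inv, inv_inv, ← inv_eq_iff_eq_inv, hw]

theorem inv_map_mul (hw : IsTwistedInvolution σ w) (x : W) : (σ (x * w))⁻¹ = w * (σ x)⁻¹ := by
  rw [map_mul, mul_inv_rev, hw]

theorem simple_mul {i j : B} (hw : IsTwistedInvolution σ w) (hj : σ (cs.simple i) = cs.simple j)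
    (hfix : cs.simple i * w = w * cs.simple j) : IsTwistedInvolution σ (cs.simple i * w) := by
  rw [IsTwistedInvolution, hw.inv_map_mul, hj, cs.inv_simple, hfix]

theorem simple_mul_mul_simple {i j : B} (hw : IsTwistedInvolution σ w)
    (hij : σ (cs.simple i) = cs.simple j) (hji : σ (cs.simple j) = cs.simple i) :
    IsTwistedInvolution σ (cs.simple i * w * cs.simple j) := by
  rw [IsTwistedInvolution] at hw ⊢
  simp only [map_mul, mul_inv_rev, hw, hij, hji, cs.inv_simple, mul_assoc]

end IsTwistedInvolution

section HeckeModule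

variable {W H M : Type*} [Group W] [Ring H] [Algebra HeckeA H] [AddCommGroup M] [Module HeckeA M]
  {T : W → H} {a : W → M} {act : H →ₐ[HeckeA] Module.End HeckeA M} {barH : H →+* H}
  {barM : M →ₗ[ℤ] M}

theorem barM_smul_of_barH_algebraMap
    (hbarAct : ∀ (h : H) (m : M), barM (act h m) = act (barH h) (barM m)) {p q : HeckeA}
    (hpq : barH (algebraMap HeckeA H p) = algebraMap HeckeA H q) (m : M) :
    barM (p • m) = q • barM m := by
  simpa [Module.algebraMap_end_apply, hpq] using hbarAct (algebraMap HeckeA H p) m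

theorem act_T_inv_barM_of_fixed [Module.IsTorsionFree HeckeA M]
    (hbarAct : ∀ (h : H) (m : M), barM (act h m) = act (barH h) (barM m))
    (hbar_u : ∀ m : M, barM (uA • m) = (LaurentPolynomial.T (-1) : HeckeA) • barM m)
    {s t v w : W} {ε : ℤ} (hs : T s * barH (T s) = 1)
    (hTs : T v⁻¹ * T s = T w⁻¹) (hTt : T t * T v⁻¹ = T w⁻¹)
    (has : act (T s) (a v) = uA • a v + (uA + 1) • a w)
    (hat : act (T t) (a v⁻¹) = uA • a v⁻¹ + (uA + 1) • a w⁻¹)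
    (hv : act (T v⁻¹) (barM (a v)) = ε • a v⁻¹) :
    act (T w⁻¹) (barM (a w)) = -ε • a w⁻¹ := by
  have hbar_s : act (barH (T s)) (barM (a v)) =
      (LaurentPolynomial.T (-1) : HeckeA) • barM (a v) +
        ((LaurentPolynomial.T (-1) : HeckeA) + 1) • barM (a w) := by
    rw [← hbarAct, has]
    simp only [add_smul, one_smul, map_add, hbar_u]
  have hleft : act (T w⁻¹) (act (barH (T s)) (barM (a v))) = ε • a v⁻¹ := by
    rw [← Module.End.mul_apply, ← map_mul, ← hTs, mul_assoc, hs, mul_one, hv]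
  have hright : act (T w⁻¹) (barM (a v)) = ε • (uA • a v⁻¹ + (uA + 1) • a w⁻¹) := by
    rw [← hTt, map_mul, Module.End.mul_apply, hv, map_zsmul, hat]
  rw [hbar_s, map_add, map_smul, map_smul, hright] at hleft
  have hu : (LaurentPolynomial.T (-1) : HeckeA) * uA = 1 := by
    rw [uA, ← T_add]; rfl
  have key : (LaurentPolynomial.T (-1) + 1 : HeckeA) •
      (act (T w⁻¹) (barM (a w)) + ε • a w⁻¹) = 0 := by
    linear_combination (norm := module) hleft - hu • (ε • (a v⁻¹ + a w⁻¹))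
  rw [smul_eq_zero_iff_right T_neg_one_add_one_ne_zero, add_eq_zero_iff_eq_neg] at key
  rw [key, neg_smul]

theorem act_T_inv_barM_of_moved
    (hbarAct : ∀ (h : H) (m : M), barM (act h m) = act (barH h) (barM m))
    {s t v w : W} {ε : ℤ} (hs : T s * barH (T s) = 1) (hT : T t * T v⁻¹ * T s = T w⁻¹)
    (has : act (T s) (a v) = a w) (hat : act (T t) (a v⁻¹) = a w⁻¹)
    (hv : act (T v⁻¹) (barM (a v)) = ε • a v⁻¹) :
    act (T w⁻¹) (barM (a w)) = ε • a w⁻¹ :=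
  calc act (T w⁻¹) (barM (a w)) = act (T w⁻¹ * barH (T s)) (barM (a v)) := by
        rw [← has, hbarAct, map_mul, Module.End.mul_apply]
    _ = act (T t) (act (T v⁻¹) (barM (a v))) := by
        rw [← hT, mul_assoc, hs, mul_one, map_mul, Module.End.mul_apply]
    _ = ε • a w⁻¹ := by rw [hv, map_zsmul, hat]

theorem act_ne_of_quadratic {ι : Type*} (b : Module.Basis ι HeckeA M) {t : H}
    (hquad : (t + 1) * (t - algebraMap HeckeA H (uA ^ 2)) = 0) {x y : ι} (hxy : x ≠ y)
    (hx : act t (b x) = (uA ^ 2 - 1) • b x + uA ^ 2 • b y) :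
    act t (b y) ≠ (uA ^ 2 - 1) • b y + uA ^ 2 • b x := by
  intro hy
  have hq := congrArg (fun h => b.coord x (act h (b x))) hquad
  simp only [mul_sub, add_mul, one_mul, map_sub, map_add, map_mul, AlgHom.commutes,
    Module.End.mul_apply, LinearMap.sub_apply, LinearMap.add_apply, Module.algebraMap_end_apply,
    map_zero, LinearMap.zero_apply, map_smul, hx, hy] at hq
  simp [hxy.symm] at hq
  exact uA_pow_four_ne_uA_pow_two (by linear_combination hq)

end HeckeModule

section TwistedHeckeModule

variable {B W H M : Type*} [Group W] {Mx : CoxeterMatrix B} {cs : CoxeterSystem Mx W}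
  {σ : W ≃* W} [Ring H] [Algebra HeckeA H] [AddCommGroup M] [Module HeckeA M]
  {T : W → H} {a : W → M} {act : H →ₐ[HeckeA] Module.End HeckeA M} {barH : H →+* H}
  {barM : M →ₗ[ℤ] M}

local prefix:100 "s" => cs.simple
local prefix:100 "ℓ" => cs.length

theorem act_T_inv_barM_simple_mul_of_fixed [Module.IsTorsionFree HeckeA M]
    (hTmul : ∀ w w' : W, ℓ (w * w') = ℓ w + ℓ w' → T w * T w' = T (w * w'))
    (hbarAct : ∀ (h : H) (m : M), barM (act h m) = act (barH h) (barM m))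
    (hbar_u : ∀ m : M, barM (uA • m) = (LaurentPolynomial.T (-1) : HeckeA) • barM m)
    (hfix_up : ∀ (i : B) (x : W), IsTwistedInvolution σ x → s i * x = x * σ (s i) →
      ℓ x < ℓ (s i * x) → act (T (s i)) (a x) = uA • a x + (uA + 1) • a (s i * x))
    {i j : B} {v : W} (hij : σ (s i) = s j) (hji : σ (s j) = s i)
    (hsbar : T (s i) * barH (T (s i)) = 1) (hv : IsTwistedInvolution σ v)
    (hfix : s i * v = v * s j) (hlen : ℓ v + 1 = ℓ (s i * v))
    (ih : act (T v⁻¹) (barM (a v)) = (-1 : ℤ) ^ ℓ v • a v⁻¹) :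
    act (T (s i * v)⁻¹) (barM (a (s i * v))) = (-1 : ℤ) ^ ℓ (s i * v) • a (s i * v)⁻¹ := by
  have hinv_i : v⁻¹ * s i = (s i * v)⁻¹ := by simp
  have hinv_j : s j * v⁻¹ = (s i * v)⁻¹ := by rw [hfix, mul_inv_rev, cs.inv_simple]
  have hTs : T v⁻¹ * T (s i) = T (s i * v)⁻¹ := by
    rw [hTmul _ _ (by rw [hinv_i, cs.length_inv, cs.length_inv, cs.length_simple, hlen]), hinv_i]
  have hTt : T (s j) * T v⁻¹ = T (s i * v)⁻¹ := by
    rw [hTmul _ _ (by rw [hinv_j, cs.length_inv, cs.length_inv, cs.length_simple, ← hlen,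
      add_comm]), hinv_j]
  have has := hfix_up i v hv (by rw [hij, hfix]) (by omega)
  have hat := hfix_up j v⁻¹ hv.inv (by rw [hji, hinv_i, hinv_j])
    (by rw [hinv_j, cs.length_inv, cs.length_inv]; omega)
  rw [hinv_j] at hat
  rw [← hlen, pow_succ, mul_neg_one]
  exact act_T_inv_barM_of_fixed hbarAct hbar_u hsbar hTs hTt has hat ih

theorem act_T_inv_barM_simple_mul_mul_simple_of_moved
    (hTmul : ∀ w w' : W, ℓ (w * w') = ℓ w + ℓ w' → T w * T w' = T (w * w'))
    (hbarAct : ∀ (h : H) (m : M), barM (act h m) = act (barH h) (barM m))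
    (hmove_up : ∀ (i : B) (x : W), IsTwistedInvolution σ x → s i * x ≠ x * σ (s i) →
      ℓ x < ℓ (s i * x) → act (T (s i)) (a x) = a (s i * x * σ (s i)))
    {i j : B} {v : W} (hij : σ (s i) = s j) (hji : σ (s j) = s i)
    (hsbar : T (s i) * barH (T (s i)) = 1) (hv : IsTwistedInvolution σ v)
    (hmove : s i * v ≠ v * s j) (hlen : ℓ v + 2 = ℓ (s i * v * s j))
    (ih : act (T v⁻¹) (barM (a v)) = (-1 : ℤ) ^ ℓ v • a v⁻¹) :
    act (T (s i * v * s j)⁻¹) (barM (a (s i * v * s j))) =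
      (-1 : ℤ) ^ ℓ (s i * v * s j) • a (s i * v * s j)⁻¹ := by
  have hlen_i : ℓ (s i * v) = ℓ v + 1 := by
    have h₁ := cs.length_mul_le (s i * v) (s j)
    have h₂ := cs.length_mul_le (s i) v
    rw [cs.length_simple] at h₁ h₂
    omega
  have hlen_j : ℓ (v * s j) = ℓ v + 1 := by
    have h₁ := cs.length_mul_le (s i) (v * s j)
    have h₂ := cs.length_mul_le v (s j)
    rw [cs.length_simple, ← mul_assoc] at h₁
    rw [cs.length_simple] at h₂
    omega
  have hinv_j : s j * v⁻¹ = (v * s j)⁻¹ := by simp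
  have hinv : s j * v⁻¹ * s i = (s i * v * s j)⁻¹ := by simp [mul_assoc]
  have hT : T (s j) * T v⁻¹ * T (s i) = T (s i * v * s j)⁻¹ := by
    rw [hTmul (s j) v⁻¹ (by rw [hinv_j, cs.length_inv, cs.length_inv, cs.length_simple, hlen_j,
      add_comm]), hTmul _ _ (by rw [hinv, cs.length_inv, hinv_j, cs.length_inv, cs.length_simple,
      hlen_j, ← hlen]), hinv]
  have has := hmove_up i v hv (by rwa [hij]) (by omega)
  have hat := hmove_up j v⁻¹ hv.inv
    (by rw [hji]; intro h; exact hmove (by simpa using (congrArg Inv.inv h).symm))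
    (by rw [hinv_j, cs.length_inv, cs.length_inv]; omega)
  rw [hij] at has
  rw [hji, hinv] at hat
  rw [← hlen, pow_add, neg_one_sq, mul_one]
  exact act_T_inv_barM_of_moved hbarAct hsbar hT has hat ih

theorem IsTwistedInvolution.length_simple_mul_mul_simple_add_two
    (hσℓ : ∀ x : W, ℓ (σ x) = ℓ x)
    (b : Module.Basis {w : W // (σ w)⁻¹ = w} HeckeA M) (hb : ∀ w, b w = a w.1) {i j : B}
    (hquad : (T (s i) + 1) * (T (s i) - algebraMap HeckeA H (uA ^ 2)) = 0)
    (hmove_down : ∀ x : W, IsTwistedInvolution σ x → s i * x ≠ x * σ (s i) →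
      ℓ (s i * x) < ℓ x →
        act (T (s i)) (a x) = (uA ^ 2 - 1) • a x + uA ^ 2 • a (s i * x * σ (s i)))
    (hij : σ (s i) = s j) (hji : σ (s j) = s i) {w : W} (hw : IsTwistedInvolution σ w)
    (hdesc : ℓ (s i * w) + 1 = ℓ w) (hmove : s i * w ≠ w * s j) :
    ℓ (s i * w * s j) + 2 = ℓ w := by
  have hlen_j : ℓ (w * s j) = ℓ (s i * w) := by
    rw [← cs.inv_simple j, ← hij, ← hw.inv_map_mul, cs.length_inv, hσℓ]
  rcases cs.length_simple_mul (w * s j) i with hup | hdown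
  · exfalso
    have hv := hw.simple_mul_mul_simple hij hji
    set v := s i * w * s j
    have hx := hmove_down w hw (by rwa [hij]) (by omega)
    have hy := hmove_down v hv (by rw [hij]; simpa [v, mul_assoc] using hmove.symm)
      (by simp only [v, cs.simple_mul_simple_cancel_left, ← mul_assoc] at hup ⊢; omega)
    rw [hij] at hx hy
    simp only [v, cs.simple_mul_simple_cancel_left, ← mul_assoc,
      cs.simple_mul_simple_cancel_right] at hy
    rw [← hb ⟨w, hw⟩, ← hb ⟨v, hv⟩] at hx hy
    exact act_ne_of_quadratic b hquad (x := ⟨w, hw⟩) (y := ⟨v, hv⟩)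
      (fun h => hmove <| by
        simpa using eq_mul_inv_of_mul_eq (congrArg Subtype.val h.symm : v = w)) hx hy
  · rw [← mul_assoc] at hdown
    omega

theorem act_T_inv_barM_a (hσ2 : Function.Involutive σ) (hσS : ∀ i, ∃ j, σ (s i) = s j)
    (hT1 : T 1 = 1) (hTmul : ∀ w w' : W, ℓ (w * w') = ℓ w + ℓ w' → T w * T w' = T (w * w'))
    (hTquad : ∀ i : B, (T (s i) + 1) * (T (s i) - algebraMap HeckeA H (uA ^ 2)) = 0)
    (hsbar : ∀ i : B, T (s i) * barH (T (s i)) = 1)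
    (b : Module.Basis {w : W // (σ w)⁻¹ = w} HeckeA M) (hb : ∀ w, b w = a w.1)
    (hfix_up : ∀ (i : B) (x : W), IsTwistedInvolution σ x → s i * x = x * σ (s i) →
      ℓ x < ℓ (s i * x) → act (T (s i)) (a x) = uA • a x + (uA + 1) • a (s i * x))
    (hmove_up : ∀ (i : B) (x : W), IsTwistedInvolution σ x → s i * x ≠ x * σ (s i) →
      ℓ x < ℓ (s i * x) → act (T (s i)) (a x) = a (s i * x * σ (s i)))
    (hmove_down : ∀ (i : B) (x : W), IsTwistedInvolution σ x → s i * x ≠ x * σ (s i) →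
      ℓ (s i * x) < ℓ x →
        act (T (s i)) (a x) = (uA ^ 2 - 1) • a x + uA ^ 2 • a (s i * x * σ (s i)))
    (hbarAct : ∀ (h : H) (m : M), barM (act h m) = act (barH h) (barM m))
    (hbar_u : ∀ m : M, barM (uA • m) = (LaurentPolynomial.T (-1) : HeckeA) • barM m)
    (hbar1 : barM (a 1) = a 1) (w : W) (hw : IsTwistedInvolution σ w) :
    act (T w⁻¹) (barM (a w)) = (-1 : ℤ) ^ ℓ w • a w⁻¹ := by
  have := b.isTorsionFree
  induction hn : ℓ w using Nat.strong_induction_on generalizing w with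
  | _ n ih =>
  subst hn
  rcases eq_or_ne w 1 with rfl | hw1
  · simp [hT1, hbar1]
  obtain ⟨i, hi⟩ := cs.exists_leftDescent_of_ne_one hw1
  obtain ⟨j, hij⟩ := hσS i
  have hji : σ (s j) = s i := by rw [← hij, hσ2]
  have hdesc := cs.isLeftDescent_iff.mp hi
  by_cases hfix : s i * w = w * s j
  · have hv := hw.simple_mul hij hfix
    obtain ⟨v, rfl⟩ : ∃ v, w = s i * v := ⟨s i * w, by simp⟩
    simp only [cs.simple_mul_simple_cancel_left] at hv hdesc hfix
    exact act_T_inv_barM_simple_mul_of_fixed hTmul hbarAct hbar_u hfix_up hij hji (hsbar i) hv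
      (by nth_rewrite 2 [hfix]; simp) hdesc (ih _ (by omega) v hv rfl)
  · have hlen := hw.length_simple_mul_mul_simple_add_two (cs.length_map_of_involutive hσ2 hσS)
      b hb (hTquad i) (hmove_down i) hij hji hdesc hfix
    have hv := hw.simple_mul_mul_simple hij hji
    obtain ⟨v, rfl⟩ : ∃ v, w = s i * v * s j := ⟨s i * w * s j, by simp [mul_assoc]⟩
    simp only [cs.simple_mul_simple_cancel_left, ← mul_assoc, cs.simple_mul_simple_cancel_right]
      at hv hlen hfix
    exact act_T_inv_barM_simple_mul_mul_simple_of_moved hTmul hbarAct hmove_up hij hji (hsbar i)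
      hv (by simpa [mul_assoc] using Ne.symm hfix) hlen (ih _ (by omega) v hv rfl)

end TwistedHeckeModule

theorem statement2_general {B W : Type} [Group W] {Mx : CoxeterMatrix B} (cs : CoxeterSystem Mx W)
    -- the automorphism `*` of `W`, with square 1, leaving `S` stable
    (star : W ≃* W) (hstar2 : ∀ w : W, star (star w) = w)
    (hstarS : ∀ i : B, ∃ j : B, star (cs.simple i) = cs.simple j)
    -- the Iwahori-Hecke algebra `H` of `(W,S)` over `A`, with basis `T w`
    (H : Type) [Ring H] [Algebra HeckeA H] (T : W → H)
    (hT1 : T 1 = 1)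
    (hTmul : ∀ w w' : W, cs.length (w * w') = cs.length w + cs.length w' →
      T w * T w' = T (w * w'))
    (hTquad : ∀ i : B, (T (cs.simple i) + 1) *
      (T (cs.simple i) - algebraMap HeckeA H (uA ^ 2)) = 0)
    -- the free `A`-module `M` with basis `{a_w : w ∈ I_*}`
    (M : Type) [AddCommGroup M] [Module HeckeA M] (a : W → M)
    (haBasis : ∃ bA : Module.Basis {w : W // (star w)⁻¹ = w} HeckeA M, ∀ w, bA w = a w.1)
    -- the `H`-module structure on `M` of Theorem 0.1
    (act : H →ₐ[HeckeA] Module.End HeckeA M)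
    (hact : ∀ (i : B) (w : W), (star w)⁻¹ = w →
      ((cs.simple i * w = w * star (cs.simple i) ∧
          cs.length w < cs.length (cs.simple i * w) →
        act (T (cs.simple i)) (a w) = uA • a w + (uA + 1) • a (cs.simple i * w)) ∧
      (cs.simple i * w = w * star (cs.simple i) ∧
          cs.length (cs.simple i * w) < cs.length w →
        act (T (cs.simple i)) (a w) =
          (uA ^ 2 - uA - 1) • a w + (uA ^ 2 - uA) • a (cs.simple i * w)) ∧
      (cs.simple i * w ≠ w * star (cs.simple i) ∧
          cs.length w < cs.length (cs.simple i * w) →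
        act (T (cs.simple i)) (a w) = a (cs.simple i * w * star (cs.simple i))) ∧
      (cs.simple i * w ≠ w * star (cs.simple i) ∧
          cs.length (cs.simple i * w) < cs.length w →
        act (T (cs.simple i)) (a w) =
          (uA ^ 2 - 1) • a w + (uA ^ 2) • a (cs.simple i * w * star (cs.simple i)))))
    -- the bar involution of `H`: the ring homomorphism with
    -- `bar (uⁿ T_x) = u⁻ⁿ (T_{x⁻¹})⁻¹`, i.e. `bar (uⁿ T_x) * T_{x⁻¹} = u⁻ⁿ`
    (barH : H →+* H)
    (hbarH : ∀ (x : W) (n : ℤ),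
      barH (algebraMap HeckeA H (LaurentPolynomial.T n) * T x) * T x⁻¹ =
        algebraMap HeckeA H (LaurentPolynomial.T (-n)))
    -- the bar operator on `M` of Theorem 0.2(a)
    (barM : M →ₗ[ℤ] M)
    (hbarAct : ∀ (h : H) (m : M), barM (act h m) = act (barH h) (barM m))
    (hbar1 : barM (a 1) = a 1) :
    -- `bar(a_w) = ε_w (T_{w⁻¹})⁻¹ a_{w⁻¹}` for all `w ∈ I_*`
    ∀ w : W, (star w)⁻¹ = w →
      barM (a w) = ((-1 : ℤ) ^ cs.length w) • act (Ring.inverse (T w⁻¹)) (a w⁻¹) := by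
  obtain ⟨bA, hbA⟩ := haBasis
  have hTs_unit (i : B) : IsUnit (T (cs.simple i)) :=
    isUnit_of_add_one_mul_sub_algebraMap_eq_zero ((isUnit_T 1).pow 2) (hTquad i)
  have hsbar (i : B) : T (cs.simple i) * barH (T (cs.simple i)) = 1 :=
    (hTs_unit i).mul_eq_one_of_mul_eq_one (by simpa using hbarH (cs.simple i) 0)
  have hbar_u := barM_smul_of_barH_algebraMap hbarAct (by simpa [hT1] using hbarH 1 1)
  intro w hw
  have key := act_T_inv_barM_a hstar2 hstarS hT1 hTmul hTquad hsbar bA hbA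
    (fun i x hx h1 h2 => (hact i x hx).1 ⟨h1, h2⟩)
    (fun i x hx h1 h2 => (hact i x hx).2.2.1 ⟨h1, h2⟩)
    (fun i x hx h1 h2 => (hact i x hx).2.2.2 ⟨h1, h2⟩) hbarAct hbar_u hbar1 w hw
  rw [← map_zsmul, ← key, ← Module.End.mul_apply, ← map_mul,
    Ring.inverse_mul_cancel _ (cs.isUnit_of_isUnit_simple hT1 hTmul hTs_unit w⁻¹), map_one,
    Module.End.one_apply]

theorem statement2 {B W : Type} [Group W] {Mx : CoxeterMatrix B} (cs : CoxeterSystem Mx W)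
    -- the automorphism `*` of `W`, with square 1, leaving `S` stable
    (star : W ≃* W) (hstar2 : ∀ w : W, star (star w) = w)
    (hstarS : ∀ i : B, ∃ j : B, star (cs.simple i) = cs.simple j)
    -- the Iwahori-Hecke algebra `H` of `(W,S)` over `A`, with basis `T w`
    (H : Type) [Ring H] [Algebra HeckeA H] (T : W → H)
    (hTbasis : ∃ bT : Module.Basis W HeckeA H, ∀ w : W, bT w = T w)
    (hT1 : T 1 = 1)
    (hTmul : ∀ w w' : W, cs.length (w * w') = cs.length w + cs.length w' →
      T w * T w' = T (w * w'))
    (hTquad : ∀ i : B, (T (cs.simple i) + 1) *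
      (T (cs.simple i) - algebraMap HeckeA H (uA ^ 2)) = 0)
    -- the free `A`-module `M` with basis `{a_w : w ∈ I_*}`
    (M : Type) [AddCommGroup M] [Module HeckeA M] (a : W → M)
    (haBasis : ∃ bA : Module.Basis {w : W // (star w)⁻¹ = w} HeckeA M, ∀ w, bA w = a w.1)
    -- the `H`-module structure on `M` of Theorem 0.1
    (act : H →ₐ[HeckeA] Module.End HeckeA M)
    (hact : ∀ (i : B) (w : W), (star w)⁻¹ = w →
      ((cs.simple i * w = w * star (cs.simple i) ∧
          cs.length w < cs.length (cs.simple i * w) →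
        act (T (cs.simple i)) (a w) = uA • a w + (uA + 1) • a (cs.simple i * w)) ∧
      (cs.simple i * w = w * star (cs.simple i) ∧
          cs.length (cs.simple i * w) < cs.length w →
        act (T (cs.simple i)) (a w) =
          (uA ^ 2 - uA - 1) • a w + (uA ^ 2 - uA) • a (cs.simple i * w)) ∧
      (cs.simple i * w ≠ w * star (cs.simple i) ∧
          cs.length w < cs.length (cs.simple i * w) →
        act (T (cs.simple i)) (a w) = a (cs.simple i * w * star (cs.simple i))) ∧
      (cs.simple i * w ≠ w * star (cs.simple i) ∧
          cs.length (cs.simple i * w) < cs.length w →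
        act (T (cs.simple i)) (a w) =
          (uA ^ 2 - 1) • a w + (uA ^ 2) • a (cs.simple i * w * star (cs.simple i)))))
    -- the bar involution of `H`: the ring homomorphism with
    -- `bar (uⁿ T_x) = u⁻ⁿ (T_{x⁻¹})⁻¹`, i.e. `bar (uⁿ T_x) * T_{x⁻¹} = u⁻ⁿ`
    (barH : H →+* H)
    (hbarH : ∀ (x : W) (n : ℤ),
      barH (algebraMap HeckeA H (LaurentPolynomial.T n) * T x) * T x⁻¹ =
        algebraMap HeckeA H (LaurentPolynomial.T (-n)))
    -- the bar operator on `M` of Theorem 0.2(a)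
    (barM : M →ₗ[ℤ] M)
    (hbarAct : ∀ (h : H) (m : M), barM (act h m) = act (barH h) (barM m))
    (hbar1 : barM (a 1) = a 1) :
    -- `bar(a_w) = ε_w (T_{w⁻¹})⁻¹ a_{w⁻¹}` for all `w ∈ I_*`
    ∀ w : W, (star w)⁻¹ = w →
      barM (a w) = ((-1 : ℤ) ^ cs.length w) • act (Ring.inverse (T w⁻¹)) (a w⁻¹) :=
  statement2_general cs star hstar2 hstarS H T hT1 hTmul hTquad M a haBasis act hact barH hbarH barM
    hbarAct hbar1
end

section
/- Let Ω ∈ I^K_*, let x ∈ I_* ∩ Ω and let b = b_Ω be the unique element of minimal length of Ω. Then there exists a sequence x = x_0, x_1, …, x_n = b in I_* ∩ Ω and a sequence s_1, s_2, …, s_n in S such that for every i ∈ {1,…,n} we have x_i = s_i • x_{i−1}. -/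
open LaurentPolynomial
open scoped Classical

/-- The ground ring `Ā = ℤ[v,v⁻¹]`; we regard `A = ℤ[u,u⁻¹]` as a subring via `u = v²`,
so that `u = LaurentPolynomial.T 2` and `v = LaurentPolynomial.T 1`. -/
noncomputable abbrev Av : Type := LaurentPolynomial ℤ

/-- The Bruhat order on a Coxeter group: `x ≤ y` iff there is a chain from `x` to `y`
obtained by multiplying by reflections, increasing the length at each step. -/
def BruhatLE {B W : Type} [Group W] {Mx : CoxeterMatrix B} (cs : CoxeterSystem Mx W)
    (x y : W) : Prop :=
  Relation.ReflTransGen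
    (fun a b => (∃ t, cs.IsReflection t ∧ b = a * t) ∧ cs.length a < cs.length b) x y

/-!
If some `s ∈ K` is a left descent of `x ∈ I_*`, then `s*` is a right descent of `x = (x*)⁻¹`, and
`s • x` is strictly shorter than `x`: for `s • x = s x s*` this is the two-sided exchange argument,
which breaks down only when `s x = x s*`. If `x` has no left descent in `K`, then lengths add,
`ℓ(p x) = ℓ p + ℓ x` for `p ∈ W_K`, and applying `w ↦ (w*)⁻¹` gives `ℓ(x q) = ℓ x + ℓ q` for
`q ∈ W_{K*}`; adding the two triangle inequalities for `p x q` shows that `x` has minimal length in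
`Ω`, so `x = b`. The exchange condition itself comes from the sign representation of `W` on
reflections × `{±1}`.
-/

section TwistedAction

variable {W : Type*} [Group W] (star : W ≃* W)

noncomputable def twistedDot (s w : W) : W := if s * w = w * star s then s * w else s * w * star s

variable {star}

lemma star_twistedDot_inv (hstar : ∀ w, star (star w) = w) {s w : W} (hs : s⁻¹ = s)
    (hw : (star w)⁻¹ = w) : (star (twistedDot star s w))⁻¹ = twistedDot star s w := by
  have hs' : (star s)⁻¹ = star s := by rw [← map_inv, hs]
  unfold twistedDot
  split_ifs with h
  · rw [map_mul, mul_inv_rev, hw, hs', ← h]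
  · rw [map_mul, map_mul, hstar, mul_inv_rev, mul_inv_rev, hw, hs, hs', mul_assoc]

lemma twistedDot_mem_doubleCoset {H H' : Subgroup W} {s w g : W} (hs : s ∈ H) (hs' : star s ∈ H')
    (hw : w ∈ DoubleCoset.doubleCoset g H H') :
    twistedDot star s w ∈ DoubleCoset.doubleCoset g H H' := by
  rw [← DoubleCoset.doubleCoset_eq_of_mem hw, DoubleCoset.mem_doubleCoset]
  unfold twistedDot
  split_ifs
  · exact ⟨s, hs, 1, one_mem _, by rw [mul_one]⟩
  · exact ⟨s, hs, star s, hs', rfl⟩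

end TwistedAction

theorem Relation.ReflTransGen.exists_seq {α : Type*} {r : α → α → Prop} {a b : α}
    (h : Relation.ReflTransGen r a b) :
    ∃ (n : ℕ) (f : ℕ → α), f 0 = a ∧ f n = b ∧ ∀ i < n, r (f i) (f (i + 1)) := by
  induction h using Relation.ReflTransGen.head_induction_on with
  | refl => exact ⟨0, fun _ => b, rfl, rfl, by simp⟩
  | head hac _ ih =>
    obtain ⟨n, f, hf₀, hfn, hf⟩ := ih
    refine ⟨n + 1, fun | 0 => _ | k + 1 => f k, rfl, hfn, ?_⟩
    rintro (_ | i) hi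
    · simpa [hf₀] using hac
    · exact hf i (by omega)

namespace CoxeterSystem

variable {B W : Type*} [Group W] {M : CoxeterMatrix B} (cs : CoxeterSystem M W)

local prefix:100 "s " => cs.simple
local prefix:100 "π " => cs.wordProd
local prefix:100 "ℓ " => cs.length
local prefix:100 "lis " => cs.leftInvSeq

lemma simple_mul_mul_simple_eq_simple_iff {i : B} {t : W} : s i * t * s i = s i ↔ t = s i := by
  constructor
  · intro h
    simpa [mul_assoc] using congrArg (fun u => s i * u * s i) h
  · rintro rfl
    simp

noncomputable def signPerm (i : B) : Equiv.Perm (W × ℤˣ) :=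
  Function.Involutive.toPerm (fun p => (s i * p.1 * s i, (if p.1 = s i then -1 else 1) * p.2))
    (by
      rintro ⟨t, ε⟩
      by_cases ht : t = s i <;>
        simp [ht, cs.simple_mul_mul_simple_eq_simple_iff, ← mul_assoc])

lemma signPerm_apply (i : B) (p : W × ℤˣ) :
    cs.signPerm i p = (s i * p.1 * s i, (if p.1 = s i then -1 else 1) * p.2) := rfl

noncomputable def reflSign (ω : List B) (t : W) : ℤˣ := (-1) ^ (lis ω).count t

lemma reflSign_cons (i : B) (ω : List B) (t : W) :
    cs.reflSign (i :: ω) t =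
      (if t = s i then -1 else 1) * cs.reflSign ω (s i * t * s i) := by
  have ht : t = MulAut.conj (s i) (s i * t * s i) := by simp [mul_assoc]
  rw [reflSign, reflSign, leftInvSeq, List.count_cons, ht,
    List.count_map_of_injective _ _ (MulAut.conj (s i)).injective, ← ht]
  by_cases h : t = s i
  · simp [h, pow_succ, mul_comm]
  · simp [h, Ne.symm h]

lemma prod_reverse_map_signPerm (ω : List B) (p : W × ℤˣ) :
    (ω.map cs.signPerm).reverse.prod p = ((π ω)⁻¹ * p.1 * π ω, cs.reflSign ω p.1 * p.2) := by
  induction ω generalizing p with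
  | nil => simp [reflSign]
  | cons i ω ih =>
    obtain ⟨t, ε⟩ := p
    simp only [List.map_cons, List.reverse_cons, List.prod_append, List.prod_singleton,
      Equiv.Perm.mul_apply, ih, signPerm_apply, reflSign_cons, wordProd_cons, mul_inv_rev,
      inv_simple, Prod.mk.injEq]
    exact ⟨by group, (mul_left_comm _ _ _).trans (mul_assoc _ _ _).symm⟩

lemma wordProd_alternatingWord_add_two_mul (i j : B) (n : ℕ) :
    π (alternatingWord i j (n + 2 * M j i)) = π (alternatingWord i j n) := by
  have hn : (n + 2 * M j i) / 2 = n / 2 + M j i := by omega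
  simp [prod_alternatingWord_eq_mul_pow, hn, pow_add, Nat.even_add]

lemma leftInvSeq_alternatingWord_eq_append (i j : B) :
    lis (alternatingWord i j (2 * M i j)) =
      (lis (alternatingWord i j (2 * M i j))).take (M i j) ++
        (lis (alternatingWord i j (2 * M i j))).take (M i j) := by
  set l := lis (alternatingWord i j (2 * M i j))
  have hl : l.length = 2 * M i j := by simp [l]
  conv_lhs => rw [← List.take_append_drop (M i j) l]
  congr 1
  refine List.ext_getElem (by simp [hl]; omega) fun k hk₁ hk₂ => ?_
  simp only [List.getElem_drop, List.getElem_take, l]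
  rw [getElem_leftInvSeq_alternatingWord, getElem_leftInvSeq_alternatingWord,
    show 2 * (M i j + k) + 1 = 2 * k + 1 + 2 * M i j by ring,
    wordProd_alternatingWord_add_two_mul]
  all_goals simp [hl] at hk₁ hk₂; omega

lemma reflSign_alternatingWord (i j : B) (t : W) :
    cs.reflSign (alternatingWord i j (2 * M i j)) t = 1 := by
  rw [reflSign, leftInvSeq_alternatingWord_eq_append, List.count_append, pow_add,
    Int.units_mul_self]

lemma prod_reverse_map_signPerm_alternatingWord (i j : B) (n : ℕ) :
    ((alternatingWord j i (2 * n)).map cs.signPerm).reverse.prod =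
      (cs.signPerm i * cs.signPerm j) ^ n := by
  induction n with
  | zero => simp [alternatingWord]
  | succ n ih =>
    rw [show 2 * (n + 1) = 2 * n + 1 + 1 by ring, alternatingWord_succ, alternatingWord_succ]
    simp [ih, pow_succ', mul_assoc]

lemma isLiftable_signPerm : M.IsLiftable cs.signPerm := by
  intro i j
  ext1 ⟨t, ε⟩
  rw [← prod_reverse_map_signPerm_alternatingWord, prod_reverse_map_signPerm,
    CoxeterMatrix.symmetric, reflSign_alternatingWord, prod_alternatingWord_eq_mul_pow]
  simp

lemma reflSign_eq_of_wordProd_eq {ω ω' : List B} (h : π ω = π ω') (t : W) :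
    cs.reflSign ω t = cs.reflSign ω' t := by
  let Φ : W →* Equiv.Perm (W × ℤˣ) := cs.lift ⟨cs.signPerm, cs.isLiftable_signPerm⟩
  have hΦ : ∀ χ : List B, Φ (π χ)⁻¹ = (χ.map cs.signPerm).reverse.prod := fun χ => by
    rw [← wordProd_reverse, ← List.map_reverse]
    induction χ.reverse with
    | nil => simp
    | cons i χ ih => simp [wordProd_cons, ih, Φ, lift_apply_simple]
  have := congrArg (fun f : Equiv.Perm (W × ℤˣ) => (f (t, 1)).2) ((hΦ ω).symm.trans (h ▸ hΦ ω'))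
  simpa [prod_reverse_map_signPerm] using this

theorem exists_eraseIdx_of_isLeftDescent {ω : List B} {i : B} (h : cs.IsLeftDescent (π ω) i) :
    ∃ j < ω.length, s i * π ω = π (ω.eraseIdx j) := by
  obtain ⟨χ, hχ, hχω⟩ := cs.exists_isReduced (s i * π ω)
  have hprod : π (i :: χ) = π ω := by rw [wordProd_cons, ← hχω, simple_mul_simple_cancel_left]
  have hnot : s i ∉ lis χ := fun hmem => by
    have := (cs.isLeftInversion_of_mem_leftInvSeq hχ hmem).2
    rw [← hχω, simple_mul_simple_cancel_left] at this
    exact lt_asymm h this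
  -- `s i` occurs exactly once in the left inversion sequence of the word `i :: χ` for `π ω`
  have hsign : cs.reflSign ω (s i) = -1 := by
    rw [← cs.reflSign_eq_of_wordProd_eq hprod, reflSign_cons, if_pos rfl, simple_mul_simple_self,
      one_mul, reflSign, List.count_eq_zero.mpr hnot]
    simp
  have hmem : s i ∈ lis ω := by
    by_contra hc
    rw [reflSign, List.count_eq_zero.mpr hc] at hsign
    exact absurd hsign (by decide)
  obtain ⟨j, hj, hji⟩ := List.mem_iff_getElem.mp hmem
  refine ⟨j, by simpa using hj, ?_⟩
  rw [← hji, ← List.getD_eq_getElem _ 1 hj, getD_leftInvSeq_mul_wordProd]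

theorem exists_isReduced_sublist (ω : List B) :
    ∃ ω' : List B, ω'.Sublist ω ∧ cs.IsReduced ω' ∧ π ω' = π ω := by
  induction ω with
  | nil => exact ⟨[], List.Sublist.refl _, by simp [IsReduced], rfl⟩
  | cons i ω ih =>
    obtain ⟨ω', hsub, hred, hprod⟩ := ih
    rcases cs.length_simple_mul (π ω') i with hup | hdown
    · refine ⟨i :: ω', hsub.cons_cons i, ?_, by rw [wordProd_cons, wordProd_cons, hprod]⟩
      rw [IsReduced, wordProd_cons, hup, hred, List.length_cons]
    · obtain ⟨j, hj, hji⟩ := cs.exists_eraseIdx_of_isLeftDescent (show ℓ (s i * π ω') < ℓ (π ω') by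
        omega)
      refine ⟨ω'.eraseIdx j, ((List.eraseIdx_sublist ω' j).trans hsub).cons i, ?_, ?_⟩
      · rw [IsReduced, ← hji, List.length_eraseIdx_of_lt hj, ← hred]
        omega
      · rw [← hji, hprod, wordProd_cons]

theorem exists_isReduced_of_mem_closure {K : Set B} {p : W}
    (hp : p ∈ Subgroup.closure (cs.simple '' K)) :
    ∃ ω : List B, (∀ i ∈ ω, i ∈ K) ∧ cs.IsReduced ω ∧ π ω = p := by
  have hword : ∃ ω : List B, (∀ i ∈ ω, i ∈ K) ∧ π ω = p := by
    induction hp using Subgroup.closure_induction_left with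
    | one => exact ⟨[], by simp, rfl⟩
    | mul_left x hx y _ ih
    | inv_mul_cancel x hx y _ ih =>
      obtain ⟨i, hi, rfl⟩ := hx
      obtain ⟨ω, hω, rfl⟩ := ih
      refine ⟨i :: ω, ?_, by simp [wordProd_cons]⟩
      simpa [hi] using hω
  obtain ⟨ω, hω, rfl⟩ := hword
  obtain ⟨ω', hsub, hred, hprod⟩ := cs.exists_isReduced_sublist ω
  exact ⟨ω', fun i hi => hω i (hsub.subset hi), hred, hprod⟩

lemma eq_one_of_forall_not_isLeftDescent {K : Set B} {q : W}
    (hq : q ∈ Subgroup.closure (cs.simple '' K)) (h : ∀ i ∈ K, ¬ cs.IsLeftDescent q i) : q = 1 := by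
  obtain ⟨ω, hK, hred, rfl⟩ := cs.exists_isReduced_of_mem_closure hq
  cases ω with
  | nil => rfl
  | cons i ω =>
    refine absurd ?_ (h i (hK i List.mem_cons_self))
    rw [IsLeftDescent, wordProd_cons, simple_mul_simple_cancel_left, ← wordProd_cons, hred]
    exact (cs.length_wordProd_le ω).trans_lt (by simp)

section MinimalCosetRepresentative

variable {K : Set B} {d : W}

lemma length_simple_mul_mul_of_forall_length_le
    (hd : ∀ q ∈ Subgroup.closure (cs.simple '' K), ℓ d ≤ ℓ (q * d)) {i : B} (hi : i ∈ K) {y : W}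
    (hy : y ∈ Subgroup.closure (cs.simple '' K)) (h : ℓ (y * d) = ℓ y + ℓ d) :
    ℓ (s i * y * d) = ℓ (s i * y) + ℓ d := by
  have hle := cs.length_mul_le (s i * y) d
  have hsy := cs.length_simple_mul y i
  rcases cs.length_simple_mul (y * d) i with hup | hdown
  · rw [← mul_assoc] at hup
    omega
  obtain ⟨α, hα, rfl⟩ := cs.exists_isReduced y
  obtain ⟨β, hβ, rfl⟩ := cs.exists_isReduced d
  obtain ⟨j, hj, hji⟩ := cs.exists_eraseIdx_of_isLeftDescent (ω := α ++ β) (i := i)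
    (by rw [IsLeftDescent, wordProd_append]; omega)
  rw [wordProd_append] at hji
  rw [← mul_assoc] at hdown
  rw [List.length_append] at hj
  rw [IsReduced] at hα hβ
  rcases lt_or_ge j α.length with hjα | hjα
  · -- the deleted letter lies in `α`, so `s i` shortens `π α`
    rw [List.eraseIdx_append_of_lt_length hjα, wordProd_append, ← mul_assoc] at hji
    have hlen := cs.length_wordProd_le (α.eraseIdx j)
    rw [← mul_right_cancel hji, List.length_eraseIdx_of_lt hjα] at hlen
    omega
  · -- the deleted letter lies in `β`, producing a shorter element of `W_K d`
    rw [List.eraseIdx_append_of_length_le hjα, wordProd_append] at hji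
    have hconj : (π α)⁻¹ * s i * π α ∈ Subgroup.closure (cs.simple '' K) :=
      mul_mem (mul_mem (inv_mem hy) (Subgroup.subset_closure ⟨i, hi, rfl⟩)) hy
    have hshort := hd _ hconj
    have hlen := cs.length_wordProd_le (β.eraseIdx (j - α.length))
    rw [List.length_eraseIdx_of_lt (by omega)] at hlen
    rw [show (π α)⁻¹ * s i * π α * π β = π (β.eraseIdx (j - α.length)) by
      rw [← inv_mul_cancel_left (π α) (π (β.eraseIdx _)), ← hji]; group] at hshort
    omega

lemma length_mul_of_forall_length_le
    (hd : ∀ q ∈ Subgroup.closure (cs.simple '' K), ℓ d ≤ ℓ (q * d)) {p : W}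
    (hp : p ∈ Subgroup.closure (cs.simple '' K)) : ℓ (p * d) = ℓ p + ℓ d := by
  induction hp using Subgroup.closure_induction_left with
  | one => simp
  | mul_left x hx y hy ih =>
    obtain ⟨i, hi, rfl⟩ := hx
    exact cs.length_simple_mul_mul_of_forall_length_le hd hi hy ih
  | inv_mul_cancel x hx y hy ih =>
    obtain ⟨i, hi, rfl⟩ := hx
    rw [inv_simple]
    exact cs.length_simple_mul_mul_of_forall_length_le hd hi hy ih

end MinimalCosetRepresentative

theorem length_mul_of_forall_not_isLeftDescent {K : Set B} {x : W}
    (hx : ∀ i ∈ K, ¬ cs.IsLeftDescent x i) {p : W}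
    (hp : p ∈ Subgroup.closure (cs.simple '' K)) : ℓ (p * x) = ℓ p + ℓ x := by
  obtain ⟨q, hq, hmin⟩ := (InvImage.wf (fun q => ℓ (q * x)) wellFounded_lt).has_min
    (Subgroup.closure (cs.simple '' K) : Set W) ⟨1, one_mem _⟩
  have hd : ∀ q' ∈ Subgroup.closure (cs.simple '' K), ℓ (q * x) ≤ ℓ (q' * (q * x)) :=
    fun q' hq' => by simpa [InvImage, mul_assoc] using hmin (q' * q) (mul_mem hq' hq)
  have hq₁ : q⁻¹ = 1 := by
    refine cs.eq_one_of_forall_not_isLeftDescent (inv_mem hq) fun i hi hdesc => hx i hi ?_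
    have h₁ := cs.length_mul_of_forall_length_le hd (inv_mem hq)
    have h₂ := cs.length_mul_of_forall_length_le hd
      (mul_mem (Subgroup.subset_closure ⟨i, hi, rfl⟩) (inv_mem hq))
    rw [inv_mul_cancel_left] at h₁
    rw [mul_assoc, inv_mul_cancel_left] at h₂
    rw [IsLeftDescent] at hdesc ⊢
    omega
  obtain rfl : q = 1 := inv_eq_one.mp hq₁
  simpa using cs.length_mul_of_forall_length_le hd hp

lemma length_le_length_mul_mul {p y q : W} (hp : ℓ (p * y) = ℓ p + ℓ y)
    (hq : ℓ (y * q) = ℓ y + ℓ q) : ℓ y ≤ ℓ (p * y * q) := by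
  have h₁ := cs.length_le_length_mul_add_right (p * y) q
  have h₂ := cs.length_le_length_mul_add_left p (y * q)
  rw [← mul_assoc] at h₂
  omega

theorem length_simple_mul_mul_simple_lt {x : W} {i j : B} (hl : cs.IsLeftDescent x i)
    (hr : cs.IsRightDescent x j) (hne : s i * x ≠ x * s j) : ℓ (s i * x * s j) < ℓ x := by
  rw [IsLeftDescent] at hl
  rw [IsRightDescent] at hr
  have hl' := cs.length_simple_mul x i
  have hr' := cs.length_mul_simple x j
  by_contra hge
  have hup := cs.length_mul_simple (s i * x) j
  obtain ⟨χ, hχ, hχx⟩ := cs.exists_isReduced (s i * x)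
  have hprod : π (χ ++ [j]) = s i * x * s j := by simp [wordProd_append, hχx]
  have hcancel : s i * (s i * x * s j) = x * s j := by
    rw [← mul_assoc, ← mul_assoc, simple_mul_simple_self, one_mul]
  obtain ⟨k, hk, hki⟩ := cs.exists_eraseIdx_of_isLeftDescent (ω := χ ++ [j]) (i := i)
    (by rw [IsLeftDescent, hprod, hcancel]; omega)
  rw [hprod, hcancel] at hki
  rcases lt_or_ge k χ.length with hkχ | hkχ
  · rw [List.eraseIdx_append_of_lt_length hkχ, wordProd_append, wordProd_singleton] at hki
    have hlen := cs.length_wordProd_le (χ.eraseIdx k)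
    rw [← mul_right_cancel hki, List.length_eraseIdx_of_lt hkχ, ← hχ, ← hχx] at hlen
    omega
  · have hk' : k - χ.length = 0 := by simp at hk; omega
    rw [List.eraseIdx_append_of_length_le hkχ, hk'] at hki
    exact hne (by simpa [← hχx] using hki.symm)

lemma length_apply_le {φ : W →* W} (hφ : ∀ i : B, ∃ j : B, φ (s i) = s j) (w : W) :
    ℓ (φ w) ≤ ℓ w := by
  have hword : ∀ ω : List B, ℓ (φ (π ω)) ≤ ω.length := fun ω => by
    induction ω with
    | nil => simp
    | cons i ω ih =>
      obtain ⟨j, hj⟩ := hφ i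
      rw [wordProd_cons, map_mul, hj, List.length_cons]
      exact (cs.length_mul_le _ _).trans (by rw [length_simple]; omega)
  obtain ⟨ω, hω, rfl⟩ := cs.exists_isReduced w
  exact hω ▸ hword ω

lemma length_map_eq {φ : W ≃* W} (hφ₂ : ∀ w, φ (φ w) = w)
    (hφ : ∀ i : B, ∃ j : B, φ (s i) = s j) (w : W) : ℓ (φ w) = ℓ w :=
  (cs.length_apply_le (φ := φ.toMonoidHom) hφ w).antisymm
    (by simpa [hφ₂] using cs.length_apply_le (φ := φ.toMonoidHom) hφ (φ w))

section TwistedDescent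

variable {star : W ≃* W}

lemma length_twistedDot_lt (hℓ : ∀ w, ℓ (star w) = ℓ w) (hS : ∀ i : B, ∃ j : B, star (s i) = s j)
    {w : W} (hw : (star w)⁻¹ = w) {i : B} (hi : cs.IsLeftDescent w i) :
    ℓ (twistedDot star (s i) w) < ℓ w := by
  obtain ⟨j, hj⟩ := hS i
  have hr : cs.IsRightDescent w j := by
    have : w * s j = (star (s i * w))⁻¹ := by rw [map_mul, mul_inv_rev, hw, hj, inv_simple]
    rw [IsRightDescent, this, length_inv, hℓ]
    exact hi
  unfold twistedDot
  split_ifs with h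
  · exact hi
  · rw [hj] at h ⊢
    exact cs.length_simple_mul_mul_simple_lt hi hr h

lemma length_mul_of_star_inv_eq (hℓ : ∀ w, ℓ (star w) = ℓ w) {K : Set B} {y : W}
    (hy : (star y)⁻¹ = y) (hK : ∀ i ∈ K, ¬ cs.IsLeftDescent y i) {q : W}
    (hq : q ∈ Subgroup.closure ((fun t => star t) '' (cs.simple '' K))) :
    ℓ (y * q) = ℓ y + ℓ q := by
  have hq' : q ∈ (Subgroup.closure (cs.simple '' K)).map star.toMonoidHom := by
    rw [MonoidHom.map_closure]
    exact hq
  obtain ⟨p, hp, rfl⟩ := Subgroup.mem_map.mp hq'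
  have : y * star p = (star (p⁻¹ * y))⁻¹ := by rw [map_mul, mul_inv_rev, hy, map_inv, inv_inv]
  simp only [MulEquiv.coe_toMonoidHom]
  rw [this, length_inv, hℓ, cs.length_mul_of_forall_not_isLeftDescent hK (inv_mem hp), length_inv,
    hℓ, add_comm]

lemma length_le_length_mul_mul_of_star_inv_eq (hℓ : ∀ w, ℓ (star w) = ℓ w) {K : Set B} {y : W}
    (hy : (star y)⁻¹ = y) (hK : ∀ i ∈ K, ¬ cs.IsLeftDescent y i) {p q : W}
    (hp : p ∈ Subgroup.closure (cs.simple '' K))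
    (hq : q ∈ Subgroup.closure ((fun t => star t) '' (cs.simple '' K))) :
    ℓ y ≤ ℓ (p * y * q) :=
  cs.length_le_length_mul_mul (cs.length_mul_of_forall_not_isLeftDescent hK hp)
    (cs.length_mul_of_star_inv_eq hℓ hy hK hq)

end TwistedDescent

end CoxeterSystem

theorem statement10_general {B W : Type} [Group W] {Mx : CoxeterMatrix B} (cs : CoxeterSystem Mx W)
    (star : W ≃* W) (hstar2 : ∀ w : W, star (star w) = w)
    (hstarS : ∀ i : B, ∃ j : B, star (cs.simple i) = cs.simple j)
    -- `K ⊆ S` with `W_K` finite, and `W_{K*}`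
    (K : Set B)
    -- `Ω` is a `(W_K, W_{K*})`-double coset, stable under `w ↦ (w*)⁻¹`
    (Ω : Set W)
    (hΩdc : ∃ g : W, Ω = {w : W | ∃ p ∈ (Subgroup.closure (cs.simple '' K) : Subgroup W),
      ∃ q ∈ (Subgroup.closure ((fun t => star t) '' (cs.simple '' K)) : Subgroup W),
      w = p * g * q})
    -- `x ∈ I_* ∩ Ω`
    (x : W) (hx : (star x)⁻¹ = x) (hxΩ : x ∈ Ω)
    -- `b` is the unique element of minimal length of `Ω`
    (b : W) (hb : b ∈ Ω) (hbmin : ∀ w ∈ Ω, w ≠ b → cs.length b < cs.length w) :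
    -- the chain from `x` down to `b`
    ∃ (n : ℕ) (xs : ℕ → W),
      xs 0 = x ∧ xs n = b ∧
      (∀ i ≤ n, xs i ∈ Ω ∧ (star (xs i))⁻¹ = xs i) ∧
      (∀ i < n, ∃ j : B, xs (i + 1) =
        if cs.simple j * xs i = xs i * star (cs.simple j) then cs.simple j * xs i
        else cs.simple j * xs i * star (cs.simple j)) := by
  set H := Subgroup.closure (cs.simple '' K)
  set H' := Subgroup.closure ((fun t => star t) '' (cs.simple '' K))
  obtain ⟨g, rfl⟩ : ∃ g, Ω = DoubleCoset.doubleCoset g H H' := by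
    obtain ⟨g, rfl⟩ := hΩdc
    exact ⟨g, Set.ext fun w => DoubleCoset.mem_doubleCoset.symm⟩
  have hℓ := cs.length_map_eq hstar2 hstarS
  suffices h : Relation.ReflTransGen (fun y z => (z ∈ DoubleCoset.doubleCoset g H H' ∧
      (star z)⁻¹ = z) ∧ ∃ j : B, z = twistedDot star (cs.simple j) y) x b by
    obtain ⟨n, xs, h₀, hn, hstep⟩ := h.exists_seq
    refine ⟨n, xs, h₀, hn, ?_, fun i hi => (hstep i hi).2⟩
    rintro (_ | i) hi
    · exact h₀ ▸ ⟨hxΩ, hx⟩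
    · exact (hstep i (by omega)).1
  induction hn : cs.length x using Nat.strong_induction_on generalizing x with
  | _ n ih =>
  by_cases hdesc : ∃ i ∈ K, cs.IsLeftDescent x i
  · obtain ⟨i, hi, hxi⟩ := hdesc
    have hmem : twistedDot star (cs.simple i) x ∈ DoubleCoset.doubleCoset g H H' :=
      twistedDot_mem_doubleCoset (Subgroup.subset_closure ⟨i, hi, rfl⟩)
        (Subgroup.subset_closure ⟨cs.simple i, ⟨i, hi, rfl⟩, rfl⟩) hxΩ
    have hinv := star_twistedDot_inv hstar2 (cs.inv_simple i) hx
    exact .head ⟨⟨hmem, hinv⟩, i, rfl⟩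
      (ih _ (hn ▸ cs.length_twistedDot_lt hℓ hstarS hx hxi) _ hinv hmem rfl)
  · push Not at hdesc
    obtain ⟨p, hp, q, hq, rfl⟩ := DoubleCoset.mem_doubleCoset.mp
      ((DoubleCoset.doubleCoset_eq_of_mem hxΩ).symm ▸ hb)
    obtain hxb | hxb := eq_or_ne x (p * x * q)
    · exact hxb ▸ .refl
    · exact absurd (hbmin x hxΩ hxb)
        (not_lt.mpr (cs.length_le_length_mul_mul_of_star_inv_eq hℓ hx hdesc hp hq))

theorem statement10 {B W : Type} [Group W] {Mx : CoxeterMatrix B} (cs : CoxeterSystem Mx W)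
    (star : W ≃* W) (hstar2 : ∀ w : W, star (star w) = w)
    (hstarS : ∀ i : B, ∃ j : B, star (cs.simple i) = cs.simple j)
    -- `K ⊆ S` with `W_K` finite, and `W_{K*}`
    (K : Set B)
    (hKfin : ((Subgroup.closure (cs.simple '' K) : Subgroup W) : Set W).Finite)
    -- `Ω` is a `(W_K, W_{K*})`-double coset, stable under `w ↦ (w*)⁻¹`
    (Ω : Set W)
    (hΩdc : ∃ g : W, Ω = {w : W | ∃ p ∈ (Subgroup.closure (cs.simple '' K) : Subgroup W),
      ∃ q ∈ (Subgroup.closure ((fun t => star t) '' (cs.simple '' K)) : Subgroup W),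
      w = p * g * q})
    (hΩstab : ∀ w ∈ Ω, (star w)⁻¹ ∈ Ω)
    -- `x ∈ I_* ∩ Ω`
    (x : W) (hx : (star x)⁻¹ = x) (hxΩ : x ∈ Ω)
    -- `b` is the unique element of minimal length of `Ω`
    (b : W) (hb : b ∈ Ω) (hbmin : ∀ w ∈ Ω, w ≠ b → cs.length b < cs.length w) :
    -- the chain from `x` down to `b`
    ∃ (n : ℕ) (xs : ℕ → W),
      xs 0 = x ∧ xs n = b ∧
      (∀ i ≤ n, xs i ∈ Ω ∧ (star (xs i))⁻¹ = xs i) ∧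
      (∀ i < n, ∃ j : B, xs (i + 1) =
        if cs.simple j * xs i = xs i * star (cs.simple j) then cs.simple j * xs i
        else cs.simple j * xs i * star (cs.simple j)) :=
  statement10_general cs star hstar2 hstarS K Ω hΩdc x hx hxΩ b hb hbmin
end

section
/- Let ζ : M → ℚ(u) be the A-linear map with ζ(a_w) = u^{l(w)}·((u−1)/(u+1))^{φ(w)} for every w ∈ I_*. Then for every x ∈ W and m ∈ M we have ζ(T_x·m) = u^{2l(x)}·ζ(m). -/
/-!
By multiplicativity of `T` along reduced words it suffices to take `x = s` simple, and by
linearity `m = a_w`. Each of the four cases of the action formula is then an identity in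
`ℚ(u)` once one knows how `l` and `φ` change from `w` to `sw` or `sws*`; with `r = (u-1)/(u+1)`
the two commuting cases reduce to `(u + 1) r = u - 1`. The only non-formal input is that
`l(sws*) = l(w) ± 2` when `sw ≠ ws*`, which is Deodhar's lifting property; we derive it from the
Hecke algebra.
-/

open LaurentPolynomial

theorem Module.End.list_prod_apply_eq_pow_length_mul {R M K : Type*} [Semiring R] [AddCommMonoid M]
    [Module R M] [Monoid K] (ζ : M → K) (c : K) {E : List (Module.End R M)}
    (hE : ∀ e ∈ E, ∀ m, ζ (e m) = c * ζ m) (m : M) : ζ (E.prod m) = c ^ E.length * ζ m := by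
  induction E generalizing m with
  | nil => simp
  | cons e E ih =>
    rw [List.prod_cons, Module.End.mul_apply, hE e List.mem_cons_self,
      ih (fun e' he' => hE e' (List.mem_cons_of_mem e he')), List.length_cons, pow_succ', mul_assoc]

theorem Module.Basis.semilinearMap_end_apply_eq_mul {ι R K M : Type*} [CommRing R] [CommRing K]
    [AddCommGroup M] [Module R M] {σ : R →+* K} (b : Module.Basis ι R M) (ζ : M →ₛₗ[σ] K)
    (e : Module.End R M) (c : K) (h : ∀ i, ζ (e (b i)) = c * ζ (b i)) (m : M) :
    ζ (e m) = c * ζ m :=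
  LinearMap.congr_fun (b.ext (f₁ := ζ.comp e) (f₂ := c • ζ) h) m

namespace CoxeterSystem

variable {B W : Type*} [Group W] {Mx : CoxeterMatrix B} (cs : CoxeterSystem Mx W)

theorem length_map_le_s13 (f : W →* W) (hf : ∀ i, ∃ j, f (cs.simple i) = cs.simple j) (w : W) :
    cs.length (f w) ≤ cs.length w := by
  choose g hg using hf
  obtain ⟨ω, hω, rfl⟩ := cs.exists_isReduced w
  have hword : f (cs.wordProd ω) = cs.wordProd (ω.map g) := by
    simp only [wordProd, map_list_prod, List.map_map]
    exact congrArg List.prod (List.map_congr_left fun i _ => hg i)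
  calc cs.length (f (cs.wordProd ω)) ≤ (ω.map g).length := hword ▸ cs.length_wordProd_le _
    _ = cs.length (cs.wordProd ω) := by rw [List.length_map, hω.eq]

theorem length_map_of_involutive_s13 (f : W →* W) (hf2 : ∀ w, f (f w) = w)
    (hf : ∀ i, ∃ j, f (cs.simple i) = cs.simple j) (w : W) : cs.length (f w) = cs.length w :=
  le_antisymm (cs.length_map_le_s13 f hf w) <| by
    simpa only [hf2] using cs.length_map_le_s13 f hf (f w)

/-- Deodhar's lifting property; it holds in every Coxeter group by the exchange condition. -/
def LiftingProperty : Prop :=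
  ∀ (i j : B) (x : W), cs.length (cs.simple i * x) = cs.length x + 1 →
    cs.length (x * cs.simple j) = cs.length x + 1 →
    cs.length (cs.simple i * x * cs.simple j) = cs.length x →
    cs.simple i * x = x * cs.simple j

section Hecke

variable {R H : Type*} [CommRing R] [Ring H] [Algebra R H] {q : R} {T : W → H}

theorem hecke_T_simple_mul_self
    (hTquad : ∀ i, (T (cs.simple i) + 1) * (T (cs.simple i) - algebraMap R H q) = 0) (i : B) :
    T (cs.simple i) * T (cs.simple i) = (q - 1) • T (cs.simple i) + q • 1 := by
  rw [sub_smul, one_smul, Algebra.smul_def, Algebra.smul_def, mul_one, ← sub_eq_zero,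
    ← hTquad i, Algebra.commutes]
  noncomm_ring

theorem hecke_T_mul_simple_of_length_lt
    (hTmul : ∀ w w', cs.length (w * w') = cs.length w + cs.length w' → T w * T w' = T (w * w'))
    (hTquad : ∀ i, (T (cs.simple i) + 1) * (T (cs.simple i) - algebraMap R H q) = 0)
    {v : W} {i : B} (h : cs.length (v * cs.simple i) < cs.length v) :
    T v * T (cs.simple i) = (q - 1) • T v + q • T (v * cs.simple i) := by
  have := cs.length_mul_simple v i
  have hv : T (v * cs.simple i) * T (cs.simple i) = T v := by
    rw [hTmul _ _ (by rw [cs.length_simple, cs.simple_mul_simple_cancel_right]; omega),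
      cs.simple_mul_simple_cancel_right]
  rw [← hv, mul_assoc, cs.hecke_T_simple_mul_self hTquad, mul_add, mul_smul_comm, mul_smul_comm,
    mul_one, hv]

theorem hecke_T_simple_mul_of_length_lt
    (hTmul : ∀ w w', cs.length (w * w') = cs.length w + cs.length w' → T w * T w' = T (w * w'))
    (hTquad : ∀ i, (T (cs.simple i) + 1) * (T (cs.simple i) - algebraMap R H q) = 0)
    {v : W} {i : B} (h : cs.length (cs.simple i * v) < cs.length v) :
    T (cs.simple i) * T v = (q - 1) • T v + q • T (cs.simple i * v) := by
  have := cs.length_simple_mul v i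
  have hv : T (cs.simple i) * T (cs.simple i * v) = T v := by
    rw [hTmul _ _ (by rw [cs.length_simple, cs.simple_mul_simple_cancel_left]; omega),
      cs.simple_mul_simple_cancel_left]
  rw [← hv, ← mul_assoc, cs.hecke_T_simple_mul_self hTquad, add_mul, smul_mul_assoc,
    smul_mul_assoc, one_mul, hv]

/-- Comparing the two ways of expanding `T_s T_x T_t` leaves `(q - 1) T_{sx} = (q - 1) T_{xt}`. -/
theorem liftingProperty_of_hecke (hq : q ≠ 1) (hT : ∃ b : Module.Basis W R H, ∀ w, b w = T w)
    (hTmul : ∀ w w', cs.length (w * w') = cs.length w + cs.length w' → T w * T w' = T (w * w'))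
    (hTquad : ∀ i, (T (cs.simple i) + 1) * (T (cs.simple i) - algebraMap R H q) = 0) :
    cs.LiftingProperty := by
  intro i j x hsx hxt hsxt
  have hleft : T (cs.simple i) * T x = T (cs.simple i * x) :=
    hTmul _ _ (by rw [cs.length_simple]; omega)
  have hright : T x * T (cs.simple j) = T (x * cs.simple j) :=
    hTmul _ _ (by rw [cs.length_simple]; omega)
  have hexpand := congrArg (· * T (cs.simple j)) hleft
  simp only [mul_assoc, hright] at hexpand
  rw [cs.hecke_T_simple_mul_of_length_lt hTmul hTquad (by rw [← mul_assoc]; omega),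
    cs.hecke_T_mul_simple_of_length_lt hTmul hTquad (by omega), ← mul_assoc] at hexpand
  obtain ⟨b, hb⟩ := hT
  by_contra hne
  have hcoeff := congrArg (fun h => b.repr h (cs.simple i * x)) (add_right_cancel hexpand)
  simp only [← hb, map_smul, b.repr_self, Finsupp.smul_apply, Finsupp.single_eq_same,
    Finsupp.single_eq_of_ne hne, smul_eq_mul, mul_one, mul_zero] at hcoeff
  exact hq (sub_eq_zero.mp hcoeff.symm)

end Hecke

theorem hecke_T_wordProd {H : Type*} [Monoid H] {T : W → H} (hT1 : T 1 = 1)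
    (hTmul : ∀ w w', cs.length (w * w') = cs.length w + cs.length w' → T w * T w' = T (w * w'))
    {ω : List B} (hω : cs.IsReduced ω) :
    T (cs.wordProd ω) = (ω.map fun i => T (cs.simple i)).prod := by
  induction ω with
  | nil => simpa using hT1
  | cons i ω ih =>
    have htail : cs.IsReduced ω := by simpa using hω.drop 1
    rw [List.map_cons, List.prod_cons, ← ih htail, cs.wordProd_cons, hTmul]
    rw [← cs.wordProd_cons, hω.eq, cs.length_simple, htail.eq, List.length_cons, add_comm]

theorem hecke_act_apply_eq_pow_length_mul {ι R H M K : Type*} [CommRing R] [Ring H]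
    [Algebra R H] [AddCommGroup M] [Module R M] [CommRing K] {σ : R →+* K} {T : W → H}
    (hT1 : T 1 = 1)
    (hTmul : ∀ w w', cs.length (w * w') = cs.length w + cs.length w' → T w * T w' = T (w * w'))
    (act : H →ₐ[R] Module.End R M) (b : Module.Basis ι R M) (ζ : M →ₛₗ[σ] K) (c : K)
    (h : ∀ i j, ζ (act (T (cs.simple i)) (b j)) = c * ζ (b j)) (x : W) (m : M) :
    ζ (act (T x) m) = c ^ cs.length x * ζ m := by
  obtain ⟨ω, hω, rfl⟩ := cs.exists_isReduced x
  rw [hω.eq, cs.hecke_T_wordProd hT1 hTmul hω, map_list_prod, List.map_map,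
    ← List.length_map (f := act ∘ fun i => T (cs.simple i))]
  refine Module.End.list_prod_apply_eq_pow_length_mul ζ c (fun e he m => ?_) m
  obtain ⟨i, -, rfl⟩ := List.mem_map.mp he
  exact b.semilinearMap_end_apply_eq_mul ζ _ c (h i) m

section TwistedInvolution

variable {star : W ≃* W} {w : W} {i : B}

theorem star_simple_mul_self (i : B) : star (cs.simple i) * star (cs.simple i) = 1 := by
  rw [← map_mul, simple_mul_simple_self, map_one]

theorem length_mul_star_simple (hstar2 : ∀ w, star (star w) = w)
    (hstarS : ∀ i, ∃ j, star (cs.simple i) = cs.simple j) (hw : (star w)⁻¹ = w) (i : B) :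
    cs.length (w * star (cs.simple i)) = cs.length (cs.simple i * w) := by
  rw [← cs.length_map_of_involutive_s13 star.toMonoidHom hstar2 hstarS, MulEquiv.coe_toMonoidHom,
    map_mul, hstar2, ← cs.length_inv, mul_inv_rev, hw, inv_simple]

theorem inv_star_simple_mul (hw : (star w)⁻¹ = w)
    (hc : cs.simple i * w = w * star (cs.simple i)) :
    (star (cs.simple i * w))⁻¹ = cs.simple i * w := by
  rw [map_mul, mul_inv_rev, hw, ← map_inv, inv_simple, hc]

theorem inv_star_simple_mul_mul_star_simple (hstar2 : ∀ w, star (star w) = w)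
    (hw : (star w)⁻¹ = w) :
    (star (cs.simple i * w * star (cs.simple i)))⁻¹ = cs.simple i * w * star (cs.simple i) := by
  rw [map_mul, map_mul, hstar2, mul_inv_rev, mul_inv_rev, hw, inv_simple, ← map_inv, inv_simple,
    mul_assoc]

theorem length_simple_mul_mul_star_simple_of_lt (hlift : cs.LiftingProperty)
    (hstar2 : ∀ w, star (star w) = w) (hstarS : ∀ i, ∃ j, star (cs.simple i) = cs.simple j)
    (hw : (star w)⁻¹ = w) (hc : cs.simple i * w ≠ w * star (cs.simple i))
    (hl : cs.length w < cs.length (cs.simple i * w)) :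
    cs.length (cs.simple i * w * star (cs.simple i)) = cs.length w + 2 := by
  obtain ⟨j, hj⟩ := hstarS i
  have hws := cs.length_mul_star_simple hstar2 hstarS hw i
  have := cs.length_simple_mul w i
  rw [hj] at hws hc ⊢
  rcases cs.length_mul_simple (cs.simple i * w) j with h | h
  · omega
  · exact absurd (hlift i j w (by omega) (by omega) (by omega)) hc

theorem length_simple_mul_mul_star_simple_of_gt (hlift : cs.LiftingProperty)
    (hstar2 : ∀ w, star (star w) = w) (hstarS : ∀ i, ∃ j, star (cs.simple i) = cs.simple j)
    (hw : (star w)⁻¹ = w) (hc : cs.simple i * w ≠ w * star (cs.simple i))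
    (hl : cs.length (cs.simple i * w) < cs.length w) :
    cs.length (cs.simple i * w * star (cs.simple i)) + 2 = cs.length w := by
  obtain ⟨j, hj⟩ := hstarS i
  have hws := cs.length_mul_star_simple hstar2 hstarS hw i
  have := cs.length_simple_mul w i
  rw [hj] at hws hc ⊢
  rcases cs.length_mul_simple (cs.simple i * w) j with h | h
  · refine absurd ?_ hc
    have hsw := hlift i j (cs.simple i * w) (by rw [simple_mul_simple_cancel_left]; omega)
      (by omega) (by rw [simple_mul_simple_cancel_left]; omega)
    rw [simple_mul_simple_cancel_left] at hsw
    nth_rw 1 [hsw]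
    rw [← mul_assoc, ← mul_assoc, simple_mul_simple_self, one_mul]
  · omega

theorem phi_simple_mul_of_lt {phi : W → ℕ}
    (hphi : ∀ (i : B) (w : W), (star w)⁻¹ = w →
      cs.length (cs.simple i * w) < cs.length w →
      (cs.simple i * w = w * star (cs.simple i) → phi w = phi (cs.simple i * w) + 1) ∧
      (cs.simple i * w ≠ w * star (cs.simple i) →
        phi w = phi (cs.simple i * w * star (cs.simple i))))
    (hw : (star w)⁻¹ = w) (hc : cs.simple i * w = w * star (cs.simple i))
    (hl : cs.length w < cs.length (cs.simple i * w)) :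
    phi (cs.simple i * w) = phi w + 1 := by
  have hdesc := hphi i _ (cs.inv_star_simple_mul hw hc) (by rwa [simple_mul_simple_cancel_left])
  rw [simple_mul_simple_cancel_left] at hdesc
  refine hdesc.1 ?_
  rw [hc, mul_assoc, star_simple_mul_self, mul_one]

theorem phi_simple_mul_mul_star_simple_of_lt {phi : W → ℕ}
    (hphi : ∀ (i : B) (w : W), (star w)⁻¹ = w →
      cs.length (cs.simple i * w) < cs.length w →
      (cs.simple i * w = w * star (cs.simple i) → phi w = phi (cs.simple i * w) + 1) ∧
      (cs.simple i * w ≠ w * star (cs.simple i) →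
        phi w = phi (cs.simple i * w * star (cs.simple i))))
    (hlift : cs.LiftingProperty) (hstar2 : ∀ w, star (star w) = w)
    (hstarS : ∀ i, ∃ j, star (cs.simple i) = cs.simple j) (hw : (star w)⁻¹ = w)
    (hc : cs.simple i * w ≠ w * star (cs.simple i))
    (hl : cs.length w < cs.length (cs.simple i * w)) :
    phi (cs.simple i * w * star (cs.simple i)) = phi w := by
  have hsv : cs.simple i * (cs.simple i * w * star (cs.simple i)) = w * star (cs.simple i) := by
    rw [← mul_assoc, simple_mul_simple_cancel_left]
  have hvs : cs.simple i * w * star (cs.simple i) * star (cs.simple i) = cs.simple i * w := by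
    rw [mul_assoc, star_simple_mul_self, mul_one]
  have hdesc := hphi i _ (cs.inv_star_simple_mul_mul_star_simple hstar2 hw) (by
    rw [hsv, cs.length_mul_star_simple hstar2 hstarS hw,
      cs.length_simple_mul_mul_star_simple_of_lt hlift hstar2 hstarS hw hc hl]
    have := cs.length_simple_mul w i
    omega)
  rw [hdesc.2 (by rw [hsv, hvs]; exact Ne.symm hc), hsv, mul_assoc,
    star_simple_mul_self, mul_one]

end TwistedInvolution

end CoxeterSystem

section Zeta

variable {R K M : Type*} [CommRing R] [CommRing K] [AddCommGroup M] [Module R M] {σ : R →+* K}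
  (ζ : M →ₛₗ[σ] K) {u : R} {x r : K} {m m' : M} {l p : ℕ}

theorem zeta_smul_add_smul_of_ascent (hu : σ u = x) (hr : (x + 1) * r = x - 1)
    (hm : ζ m = x ^ l * r ^ p) (hm' : ζ m' = x ^ (l + 1) * r ^ (p + 1)) :
    ζ (u • m + (u + 1) • m') = x ^ 2 * ζ m := by
  rw [map_add, map_smulₛₗ, map_smulₛₗ, map_add, map_one, hu, hm, hm']
  linear_combination x ^ (l + 1) * r ^ p * hr

theorem zeta_smul_add_smul_of_descent (hu : σ u = x) (hr : (x + 1) * r = x - 1)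
    (hm : ζ m = x ^ (l + 1) * r ^ (p + 1)) (hm' : ζ m' = x ^ l * r ^ p) :
    ζ ((u ^ 2 - u - 1) • m + (u ^ 2 - u) • m') = x ^ 2 * ζ m := by
  simp only [map_add, map_smulₛₗ, map_sub, map_pow, map_one, hu, hm, hm']
  linear_combination -(x ^ (l + 1) * r ^ p) * hr

theorem zeta_smul_add_smul_of_twisted_descent (hu : σ u = x)
    (hm : ζ m = x ^ (l + 2) * r ^ p) (hm' : ζ m' = x ^ l * r ^ p) :
    ζ ((u ^ 2 - 1) • m + u ^ 2 • m') = x ^ 2 * ζ m := by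
  simp only [map_add, map_smulₛₗ, map_sub, map_pow, map_one, hu, hm, hm']
  ring

end Zeta

theorem uA_sq_ne_one : uA ^ 2 ≠ 1 := by
  rw [uA, T_pow, ← T_zero, LaurentPolynomial.T, LaurentPolynomial.T, Ne,
    AddMonoidAlgebra.single_left_inj one_ne_zero]
  norm_num

theorem RatFunc.X_add_one_ne_zero : (RatFunc.X + 1 : RatFunc ℚ) ≠ 0 := by
  rw [← RatFunc.algebraMap_X, ← map_one (algebraMap (Polynomial ℚ) _), ← map_add]
  exact RatFunc.algebraMap_ne_zero (Polynomial.X_add_C_ne_zero 1)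

theorem statement13_general {B W : Type} [Group W] {Mx : CoxeterMatrix B} (cs : CoxeterSystem Mx W)
    -- the automorphism `*` of `W`, with square 1, leaving `S` stable
    (star : W ≃* W) (hstar2 : ∀ w : W, star (star w) = w)
    (hstarS : ∀ i : B, ∃ j : B, star (cs.simple i) = cs.simple j)
    -- the Iwahori-Hecke algebra `H` of `(W,S)` over `A`, with basis `T w`
    (H : Type) [Ring H] [Algebra HeckeA H] (T : W → H)
    (hTbasis : ∃ bT : Module.Basis W HeckeA H, ∀ w : W, bT w = T w)
    (hT1 : T 1 = 1)
    (hTmul : ∀ w w' : W, cs.length (w * w') = cs.length w + cs.length w' →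
      T w * T w' = T (w * w'))
    (hTquad : ∀ i : B, (T (cs.simple i) + 1) *
      (T (cs.simple i) - algebraMap HeckeA H (uA ^ 2)) = 0)
    -- the free `A`-module `M` with basis `{a_w : w ∈ I_*}`
    (M : Type) [AddCommGroup M] [Module HeckeA M] (a : W → M)
    (haBasis : ∃ bA : Module.Basis {w : W // (star w)⁻¹ = w} HeckeA M, ∀ w, bA w = a w.1)
    -- the `H`-module structure on `M` of Theorem 0.1
    (act : H →ₐ[HeckeA] Module.End HeckeA M)
    (hact : ∀ (i : B) (w : W), (star w)⁻¹ = w →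
      ((cs.simple i * w = w * star (cs.simple i) ∧
          cs.length w < cs.length (cs.simple i * w) →
        act (T (cs.simple i)) (a w) = uA • a w + (uA + 1) • a (cs.simple i * w)) ∧
      (cs.simple i * w = w * star (cs.simple i) ∧
          cs.length (cs.simple i * w) < cs.length w →
        act (T (cs.simple i)) (a w) =
          (uA ^ 2 - uA - 1) • a w + (uA ^ 2 - uA) • a (cs.simple i * w)) ∧
      (cs.simple i * w ≠ w * star (cs.simple i) ∧
          cs.length w < cs.length (cs.simple i * w) →
        act (T (cs.simple i)) (a w) = a (cs.simple i * w * star (cs.simple i))) ∧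
      (cs.simple i * w ≠ w * star (cs.simple i) ∧
          cs.length (cs.simple i * w) < cs.length w →
        act (T (cs.simple i)) (a w) =
          (uA ^ 2 - 1) • a w + (uA ^ 2) • a (cs.simple i * w * star (cs.simple i)))))
    -- the function `φ` of Proposition 4.5(a)
    (phi : W → ℕ)
    (hphi : ∀ (i : B) (w : W), (star w)⁻¹ = w →
      cs.length (cs.simple i * w) < cs.length w →
      (cs.simple i * w = w * star (cs.simple i) → phi w = phi (cs.simple i * w) + 1) ∧
      (cs.simple i * w ≠ w * star (cs.simple i) →
        phi w = phi (cs.simple i * w * star (cs.simple i))))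
    -- `ℚ(u)` as an `A`-module: the embedding `A = ℤ[u,u⁻¹] → ℚ(u)`, `u ↦ X`
    (phiA : HeckeA →+* RatFunc ℚ) (hphiA : phiA uA = RatFunc.X)
    -- the `A`-linear map `ζ : M → ℚ(u)` with `ζ(a_w) = u^{l(w)}((u−1)/(u+1))^{φ(w)}`
    (zeta : M →+ RatFunc ℚ)
    (hzetalin : ∀ (c : HeckeA) (m : M), zeta (c • m) = phiA c * zeta m)
    (hzetaval : ∀ w : W, (star w)⁻¹ = w →
      zeta (a w) = RatFunc.X ^ cs.length w *
        ((RatFunc.X - 1) / (RatFunc.X + 1)) ^ phi w) :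
    ∀ (x : W) (m : M), zeta (act (T x) m) = RatFunc.X ^ (2 * cs.length x) * zeta m := by
  have hlift := cs.liftingProperty_of_hecke uA_sq_ne_one hTbasis hTmul hTquad
  let ζ : M →ₛₗ[phiA] RatFunc ℚ := { zeta with map_smul' := hzetalin }
  have hval : ∀ w, (star w)⁻¹ = w → ζ (a w) = _ := hzetaval
  have hr : (RatFunc.X + 1) * ((RatFunc.X - 1) / (RatFunc.X + 1)) = (RatFunc.X - 1 : RatFunc ℚ) :=
    mul_div_cancel₀ _ RatFunc.X_add_one_ne_zero
  have hgen (i : B) (w : W) (hw : (star w)⁻¹ = w) :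
      ζ (act (T (cs.simple i)) (a w)) = RatFunc.X ^ 2 * ζ (a w) := by
    obtain ⟨hasc, hdesc, htasc, htdesc⟩ := hact i w hw
    have hsw := cs.inv_star_simple_mul hw (i := i)
    have hswt := cs.inv_star_simple_mul_mul_star_simple hstar2 hw (i := i)
    by_cases hc : cs.simple i * w = w * star (cs.simple i) <;>
      rcases cs.length_simple_mul w i with hl | hl
    · rw [hasc ⟨hc, by omega⟩]
      refine zeta_smul_add_smul_of_ascent ζ hphiA hr (hval w hw) ?_
      rw [hval _ (hsw hc), hl, cs.phi_simple_mul_of_lt hphi hw hc (by omega)]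
    · rw [hdesc ⟨hc, by omega⟩]
      refine zeta_smul_add_smul_of_descent ζ hphiA hr ?_ (hval _ (hsw hc))
      rw [hval w hw, ← hl, (hphi i w hw (by omega)).1 hc]
    · rw [htasc ⟨hc, by omega⟩, hval _ hswt, hval w hw,
        cs.length_simple_mul_mul_star_simple_of_lt hlift hstar2 hstarS hw hc (by omega),
        cs.phi_simple_mul_mul_star_simple_of_lt hphi hlift hstar2 hstarS hw hc (by omega)]
      ring
    · rw [htdesc ⟨hc, by omega⟩]
      refine zeta_smul_add_smul_of_twisted_descent ζ hphiA ?_ (hval _ hswt)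
      rw [hval w hw,
        ← cs.length_simple_mul_mul_star_simple_of_gt hlift hstar2 hstarS hw hc (by omega),
        (hphi i w hw (by omega)).2 hc]
  obtain ⟨bA, hbA⟩ := haBasis
  intro x m
  rw [pow_mul]
  exact cs.hecke_act_apply_eq_pow_length_mul hT1 hTmul act bA ζ _
    (fun i w => hbA w ▸ hgen i w w.2) x m

theorem statement13 {B W : Type} [Group W] {Mx : CoxeterMatrix B} (cs : CoxeterSystem Mx W)
    -- the automorphism `*` of `W`, with square 1, leaving `S` stable
    (star : W ≃* W) (hstar2 : ∀ w : W, star (star w) = w)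
    (hstarS : ∀ i : B, ∃ j : B, star (cs.simple i) = cs.simple j)
    -- the Iwahori-Hecke algebra `H` of `(W,S)` over `A`, with basis `T w`
    (H : Type) [Ring H] [Algebra HeckeA H] (T : W → H)
    (hTbasis : ∃ bT : Module.Basis W HeckeA H, ∀ w : W, bT w = T w)
    (hT1 : T 1 = 1)
    (hTmul : ∀ w w' : W, cs.length (w * w') = cs.length w + cs.length w' →
      T w * T w' = T (w * w'))
    (hTquad : ∀ i : B, (T (cs.simple i) + 1) *
      (T (cs.simple i) - algebraMap HeckeA H (uA ^ 2)) = 0)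
    -- the free `A`-module `M` with basis `{a_w : w ∈ I_*}`
    (M : Type) [AddCommGroup M] [Module HeckeA M] (a : W → M)
    (haBasis : ∃ bA : Module.Basis {w : W // (star w)⁻¹ = w} HeckeA M, ∀ w, bA w = a w.1)
    -- the `H`-module structure on `M` of Theorem 0.1
    (act : H →ₐ[HeckeA] Module.End HeckeA M)
    (hact : ∀ (i : B) (w : W), (star w)⁻¹ = w →
      ((cs.simple i * w = w * star (cs.simple i) ∧
          cs.length w < cs.length (cs.simple i * w) →
        act (T (cs.simple i)) (a w) = uA • a w + (uA + 1) • a (cs.simple i * w)) ∧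
      (cs.simple i * w = w * star (cs.simple i) ∧
          cs.length (cs.simple i * w) < cs.length w →
        act (T (cs.simple i)) (a w) =
          (uA ^ 2 - uA - 1) • a w + (uA ^ 2 - uA) • a (cs.simple i * w)) ∧
      (cs.simple i * w ≠ w * star (cs.simple i) ∧
          cs.length w < cs.length (cs.simple i * w) →
        act (T (cs.simple i)) (a w) = a (cs.simple i * w * star (cs.simple i))) ∧
      (cs.simple i * w ≠ w * star (cs.simple i) ∧
          cs.length (cs.simple i * w) < cs.length w →
        act (T (cs.simple i)) (a w) =
          (uA ^ 2 - 1) • a w + (uA ^ 2) • a (cs.simple i * w * star (cs.simple i)))))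
    -- the function `φ` of Proposition 4.5(a)
    (phi : W → ℕ) (hphi1 : phi 1 = 0)
    (hphi : ∀ (i : B) (w : W), (star w)⁻¹ = w →
      cs.length (cs.simple i * w) < cs.length w →
      (cs.simple i * w = w * star (cs.simple i) → phi w = phi (cs.simple i * w) + 1) ∧
      (cs.simple i * w ≠ w * star (cs.simple i) →
        phi w = phi (cs.simple i * w * star (cs.simple i))))
    -- `ℚ(u)` as an `A`-module: the embedding `A = ℤ[u,u⁻¹] → ℚ(u)`, `u ↦ X`
    (phiA : HeckeA →+* RatFunc ℚ) (hphiA : phiA uA = RatFunc.X)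
    -- the `A`-linear map `ζ : M → ℚ(u)` with `ζ(a_w) = u^{l(w)}((u−1)/(u+1))^{φ(w)}`
    (zeta : M →+ RatFunc ℚ)
    (hzetalin : ∀ (c : HeckeA) (m : M), zeta (c • m) = phiA c * zeta m)
    (hzetaval : ∀ w : W, (star w)⁻¹ = w →
      zeta (a w) = RatFunc.X ^ cs.length w *
        ((RatFunc.X - 1) / (RatFunc.X + 1)) ^ phi w) :
    ∀ (x : W) (m : M), zeta (act (T x) m) = RatFunc.X ^ (2 * cs.length x) * zeta m :=
  statement13_general cs star hstar2 hstarS H T hTbasis hT1 hTmul hTquad M a haBasis act hact phi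
    hphi phiA hphiA zeta hzetalin hzetaval
end
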